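/- arXiv:2512.01086 — 6 statements merged into one kernel-verified Lean document; each statement's English description precedes it below -/
import Mathlib

section
/- Let S be a semigroup with a topology τ, and let G ⊆ S. Suppose S has Property X with respect to G: for every s ∈ S there exist f, g ∈ S and t ∈ G with s = f t g such that for every τ-neighbourhood U of t, the set f (U ∩ G) g = {f u g : u ∈ U ∩ G} is a τ-neighbourhood of s. If G is a subsemigroup of S and every semigroup homomorphism from G (with the subspace topology) to a topological semigroup T in a class C is continuous, then every semigroup homomorphism from S to a member of C is continuous. -/
/-!
The restriction of `θ` to `G` is continuous, hence so is `u ↦ θ f * θ u * θ g` on `G`.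
Property X says that `u ↦ f * u * g`, restricted to `G`, maps neighbourhoods of `t` onto
neighbourhoods of `s = f * t * g`, so every neighbourhood of `s` is reached from `G` near `t`,
where `θ (f * u * g) = θ f * θ u * θ g` is close to `θ s`.
-/

universe u v

open Filter Topology

theorem le_map_nhdsWithin_of_image_inter_mem_nhds {X Y : Type*} [TopologicalSpace X]
    [TopologicalSpace Y] {m : X → Y} {G : Set X} {t : X}
    (h : ∀ U ∈ 𝓝 t, m '' (U ∩ G) ∈ 𝓝 (m t)) : 𝓝 (m t) ≤ map m (𝓝[G] t) := by
  refine le_map fun W hW => ?_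
  obtain ⟨U, hU, hUW⟩ := mem_nhdsWithin_iff_exists_mem_nhds_inter.mp hW
  exact mem_of_superset (h U hU) (Set.image_mono hUW)

theorem continuousAt_of_continuousWithinAt_comp {X Y Z : Type*} [TopologicalSpace X]
    [TopologicalSpace Y] [TopologicalSpace Z] {φ : Y → Z} {m : X → Y} {G : Set X} {t : X}
    (hφm : ContinuousWithinAt (φ ∘ m) G t) (hm : 𝓝 (m t) ≤ map m (𝓝[G] t)) :
    ContinuousAt φ (m t) :=
  (tendsto_map'_iff.mpr hφm).mono_left hm

/-- Property X transfer for automatic continuity. If a topological semigroup S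
has Property X with respect to a subsemigroup G, and every semigroup homomorphism from G
(with the subspace topology) to a topological semigroup in the class C is continuous, then
every semigroup homomorphism from S to a member of C is continuous. -/
theorem stmt_5 {S : Type v} [Semigroup S] [TopologicalSpace S]
    (G : Set S) (hGsub : ∀ a ∈ G, ∀ b ∈ G, a * b ∈ G)
    (hX : ∀ s : S, ∃ f g : S, ∃ t ∈ G, s = f * t * g ∧
      ∀ U ∈ nhds t, (fun u => f * u * g) '' (U ∩ G) ∈ nhds s)
    (C : (T : Type u) → [Semigroup T] → [TopologicalSpace T] → Prop)
    (hAC : ∀ (T : Type u) [Semigroup T] [TopologicalSpace T], ContinuousMul T → C T →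
      ∀ θ : ↥G → T,
        (∀ a b : ↥G, θ ⟨(a : S) * (b : S), hGsub _ a.2 _ b.2⟩ = θ a * θ b) →
        Continuous θ) :
    ∀ (T : Type u) [Semigroup T] [TopologicalSpace T], ContinuousMul T → C T →
      ∀ θ : S →ₙ* T, Continuous θ := by
  intro T _ _ hTmul hTC θ
  have hθG : ContinuousOn θ G := continuousOn_iff_continuous_domRestrict.mpr <|
    hAC T hTmul hTC (G.domRestrict θ) fun a b => map_mul θ (a : S) b
  refine continuous_iff_continuousAt.mpr fun s => ?_
  obtain ⟨f, g, t, htG, rfl, hU⟩ := hX s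
  have hθm : ContinuousWithinAt (θ ∘ fun u => f * u * g) G t := by
    have hcomp : (θ ∘ fun u => f * u * g) = fun u => θ f * θ u * θ g := by
      funext u
      simp only [Function.comp_apply, map_mul]
    rw [hcomp]
    exact ((continuousOn_const.mul hθG).mul continuousOn_const).continuousWithinAt htG
  exact continuousAt_of_continuousWithinAt_comp (m := fun u => f * u * g) hθm
    (le_map_nhdsWithin_of_image_inter_mem_nhds hU)
end

section
/- Let S be a monoid acting faithfully on a countable set Ω and carrying the topology of pointwise convergence, and suppose every right congruence on S with countably many classes is open in S × S. Then every monoid homomorphism from S to a topological semigroup arising as a closed submonoid of Ω'^Ω' for a countable set Ω' is continuous. Conversely, if every such homomorphism is continuous, then every right congruence on S with countably many classes is open. -/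
/-!
A homomorphism `φ` into a transformation monoid on a countable discrete set is continuous iff each
orbit map `s ↦ φ s y` is; as such a map takes countably many values, this holds iff its kernel,
a right congruence with countably many classes, is open. Conversely, a right congruence `E` with
countably many classes is the kernel of the orbit map at the class of `id` of the action of `S` on
the countable set `S/E` by left multiplication.
-/

section DiscreteCodomain

variable {X Y : Type*} [TopologicalSpace X] [TopologicalSpace Y] [DiscreteTopology Y] {f : X → Y}

lemma continuous_of_isOpen_setOf_eq (h : IsOpen {p : X × X | f p.1 = f p.2}) : Continuous f := by
  refine continuous_discrete_rng.mpr fun b => ?_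
  rcases (f ⁻¹' {b}).eq_empty_or_nonempty with hb | ⟨a, ha⟩
  · simp [hb]
  · have hfib : f ⁻¹' {b} = (fun x => (x, a)) ⁻¹' {p : X × X | f p.1 = f p.2} := by
      ext x
      simp_all
    rw [hfib]
    exact h.preimage (by fun_prop)

lemma Continuous.isOpen_setOf_eq (hf : Continuous f) : IsOpen {p : X × X | f p.1 = f p.2} :=
  (isOpen_discrete {q : Y × Y | q.1 = q.2}).preimage
    (f := fun p : X × X => (f p.1, f p.2)) (by fun_prop)

end DiscreteCodomain

lemma countable_quotient_ker {α β : Type*} [Countable β] (f : α → β) :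
    Countable (Quotient (Setoid.ker f)) :=
  (Setoid.quotientKerEquivRange f).countable_iff.mpr inferInstance

lemma Set.domRestrict_extend_val {α β : Type*} {S : Set α} (ρ : S → β) (j : α → β) :
    S.domRestrict (Function.extend Subtype.val ρ j) = ρ :=
  funext fun s => Function.extend_val_apply s.2

lemma Function.extend_val_comp {Ω Y : Type*} {S : Set (Ω → Ω)}
    (hcomp : ∀ f ∈ S, ∀ g ∈ S, f ∘ g ∈ S) {ρ : S → Y → Y} {j : (Ω → Ω) → Y → Y}
    (hρ : ∀ f g : S, ρ ⟨(f : Ω → Ω) ∘ (g : Ω → Ω), hcomp _ f.2 _ g.2⟩ = ρ f ∘ ρ g) :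
    ∀ f ∈ S, ∀ g ∈ S, extend Subtype.val ρ j (f ∘ g) =
      extend Subtype.val ρ j f ∘ extend Subtype.val ρ j g := by
  intro f hf g hg
  rw [extend_val_apply hf, extend_val_apply hg, extend_val_apply (hcomp f hf g hg)]
  exact hρ ⟨f, hf⟩ ⟨g, hg⟩

section RightCongruence

variable {Ω : Type*} {S : Set (Ω → Ω)} (hcomp : ∀ f ∈ S, ∀ g ∈ S, f ∘ g ∈ S)

def IsRightCongruence (E : Setoid S) : Prop :=
  ∀ g f : S, E.r g f → ∀ h : S,
    E.r ⟨(h : Ω → Ω) ∘ (g : Ω → Ω), hcomp _ h.2 _ g.2⟩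
      ⟨(h : Ω → Ω) ∘ (f : Ω → Ω), hcomp _ h.2 _ f.2⟩

lemma isRightCongruence_ker_apply {Y : Type*} {φ : (Ω → Ω) → Y → Y}
    (hφ : ∀ f ∈ S, ∀ g ∈ S, φ (f ∘ g) = φ f ∘ φ g) (y : Y) :
    IsRightCongruence hcomp (Setoid.ker fun s : S => φ s y) := by
  intro g f hgf h
  simpa [Setoid.ker_def, hφ _ h.2 _ g.2, hφ _ h.2 _ f.2] using congrArg (φ h) hgf

variable {hcomp} {E : Setoid S} (hE : IsRightCongruence hcomp E)

def IsRightCongruence.leftMul (h : S) : Quotient E → Quotient E :=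
  Quotient.map (fun t => ⟨(h : Ω → Ω) ∘ (t : Ω → Ω), hcomp _ h.2 _ t.2⟩) fun a b hab => hE a b hab h

lemma IsRightCongruence.leftMul_id (hid : id ∈ S) : hE.leftMul ⟨id, hid⟩ = id :=
  funext (Quotient.ind fun _ => rfl)

lemma IsRightCongruence.leftMul_comp (f g : S) :
    hE.leftMul ⟨(f : Ω → Ω) ∘ (g : Ω → Ω), hcomp _ f.2 _ g.2⟩ = hE.leftMul f ∘ hE.leftMul g :=
  funext (Quotient.ind fun _ => rfl)

lemma IsRightCongruence.leftMul_mk_id (hid : id ∈ S) (h : S) :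
    hE.leftMul h (Quotient.mk E ⟨id, hid⟩) = Quotient.mk E h :=
  rfl

end RightCongruence

theorem stmt_6_general {Ω : Type*} [TopologicalSpace Ω]
    (S : Set (Ω → Ω)) (hid : id ∈ S)
    (hcomp : ∀ f ∈ S, ∀ g ∈ S, f ∘ g ∈ S) :
    (∀ E : Setoid ↥S, Countable (Quotient E) →
        (∀ g f : ↥S, E.r g f → ∀ h : ↥S,
          E.r ⟨(h : Ω → Ω) ∘ (g : Ω → Ω), hcomp _ h.2 _ g.2⟩
              ⟨(h : Ω → Ω) ∘ (f : Ω → Ω), hcomp _ h.2 _ f.2⟩) →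
        IsOpen {p : ↥S × ↥S | E.r p.1 p.2}) ↔
    (∀ (Ω' : Type) [Countable Ω'] [TopologicalSpace Ω'] [DiscreteTopology Ω']
        (T : Set (Ω' → Ω')), id ∈ T → (∀ f ∈ T, ∀ g ∈ T, f ∘ g ∈ T) → IsClosed T →
        ∀ φ : (Ω → Ω) → (Ω' → Ω'), Set.MapsTo φ S T → φ id = id →
          (∀ f ∈ S, ∀ g ∈ S, φ (f ∘ g) = φ f ∘ φ g) →
          ContinuousOn φ S) := by
  constructor
  · intro hSIP Ω' _ _ _ T _ _ _ φ _ _ hφ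
    refine continuousOn_iff_continuous_domRestrict.mpr (continuous_pi_iff.mpr fun y => ?_)
    exact continuous_of_isOpen_setOf_eq
      (hSIP _ (countable_quotient_ker _) (isRightCongruence_ker_apply hcomp hφ y))
  · intro hAC E _ (hE : IsRightCongruence hcomp E)
    let e := equivShrink.{0} (Quotient E)
    let ρ : S → Shrink.{0} (Quotient E) → Shrink.{0} (Quotient E) :=
      fun h => e.conj (hE.leftMul h)
    let : TopologicalSpace (Shrink.{0} (Quotient E)) := ⊥
    have : DiscreteTopology (Shrink.{0} (Quotient E)) := ⟨rfl⟩
    have : Countable (Shrink.{0} (Quotient E)) := Countable.of_equiv _ e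
    have hρcomp (f g : S) : ρ ⟨(f : Ω → Ω) ∘ (g : Ω → Ω), hcomp _ f.2 _ g.2⟩ = ρ f ∘ ρ g := by
      simp only [ρ, IsRightCongruence.leftMul_comp, Equiv.conj_comp]
    have hρid : Function.extend Subtype.val ρ (fun _ => id) id = id := by
      ext x
      simp [Function.extend_val_apply hid, ρ, IsRightCongruence.leftMul_id]
    have hρ : Continuous ρ := by
      simpa only [continuousOn_iff_continuous_domRestrict, Set.domRestrict_extend_val] using
        hAC _ Set.univ trivial (fun _ _ _ _ => trivial) isClosed_univ _ (Set.mapsTo_univ _ _) hρid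
          (Function.extend_val_comp hcomp hρcomp)
    convert ((continuous_apply (e (Quotient.mk E ⟨id, hid⟩))).comp hρ).isOpen_setOf_eq
      using 3 with p
    simp [ρ, IsRightCongruence.leftMul_mk_id, Quotient.eq]

/-- Let S be a transformation monoid on a countable set Ω with the pointwise
convergence topology. Then every right congruence on S with countably many classes is open
in S × S if and only if every monoid homomorphism from S to a closed transformation monoid
on a countable set is continuous. -/
theorem stmt_6 {Ω : Type*} [Countable Ω] [TopologicalSpace Ω] [DiscreteTopology Ω]
    (S : Set (Ω → Ω)) (hid : id ∈ S)
    (hcomp : ∀ f ∈ S, ∀ g ∈ S, f ∘ g ∈ S) :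
    (∀ E : Setoid ↥S, Countable (Quotient E) →
        (∀ g f : ↥S, E.r g f → ∀ h : ↥S,
          E.r ⟨(h : Ω → Ω) ∘ (g : Ω → Ω), hcomp _ h.2 _ g.2⟩
              ⟨(h : Ω → Ω) ∘ (f : Ω → Ω), hcomp _ h.2 _ f.2⟩) →
        IsOpen {p : ↥S × ↥S | E.r p.1 p.2}) ↔
    (∀ (Ω' : Type) [Countable Ω'] [TopologicalSpace Ω'] [DiscreteTopology Ω']
        (T : Set (Ω' → Ω')), id ∈ T → (∀ f ∈ T, ∀ g ∈ T, f ∘ g ∈ T) → IsClosed T →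
        ∀ φ : (Ω → Ω) → (Ω' → Ω'), Set.MapsTo φ S T → φ id = id →
          (∀ f ∈ S, ∀ g ∈ S, φ (f ∘ g) = φ f ∘ φ g) →
          ContinuousOn φ S) :=
  stmt_6_general S hid hcomp
end

section
/- Let C be a function clone on a set Ω (with the pointwise convergence topology) that contains all constant unary functions. Then every clone isomorphism ξ from C onto a closed function clone D on a set Ω' is an open map. -/
/-- A function clone on Ω. -/
def IsClone {Ω : Type*} (C : ∀ n : ℕ, Set ((Fin n → Ω) → Ω)) : Prop :=
  (∀ (n : ℕ) (i : Fin n), (fun x : Fin n → Ω => x i) ∈ C n) ∧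
  (∀ (n m : ℕ) (f : (Fin n → Ω) → Ω), f ∈ C n → ∀ g : Fin n → (Fin m → Ω) → Ω,
    (∀ i, g i ∈ C m) → (fun x : Fin m → Ω => f fun i => g i x) ∈ C m)

/-- A clone homomorphism. -/
def IsCloneHom {Ω Ω' : Type*} (C : ∀ n : ℕ, Set ((Fin n → Ω) → Ω))
    (D : ∀ n : ℕ, Set ((Fin n → Ω') → Ω'))
    (ξ : ∀ n : ℕ, ((Fin n → Ω) → Ω) → ((Fin n → Ω') → Ω')) : Prop :=
  (∀ n : ℕ, Set.MapsTo (ξ n) (C n) (D n)) ∧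
  (∀ (n : ℕ) (i : Fin n), ξ n (fun x => x i) = fun x => x i) ∧
  (∀ (n m : ℕ) (f : (Fin n → Ω) → Ω), f ∈ C n → ∀ g : Fin n → (Fin m → Ω) → Ω,
    (∀ i, g i ∈ C m) →
    ξ m (fun x => f fun i => g i x) = fun x => ξ n f fun i => ξ m (g i) x)

/-!
Constants are characterised inside a clone by the equation `c ∘ π₀ = c ∘ π₁` between binary
terms, so a clone homomorphism sends each constant `c_a` to a constant `c_{κ a}`. Applying the
composition law to `f(c_{a₁}, …, c_{aₙ}) = c_{f a}` gives `ξ f ∘ κⁿ = κ ∘ f`, and `κ` is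
injective when `ξ` is. Hence `f a = κ⁻¹ (ξ f (κ ∘ a))`: each value of `ξ⁻¹ g` depends only on
one value of `g`, so `ξ⁻¹` is continuous for the topologies of pointwise convergence.
-/

open Function

section

variable {Ω Ω' : Type*} {C : ∀ n : ℕ, Set ((Fin n → Ω) → Ω)} {D : ∀ n : ℕ, Set ((Fin n → Ω') → Ω')}
  {ξ : ∀ n : ℕ, ((Fin n → Ω) → Ω) → ((Fin n → Ω') → Ω')}

theorem IsCloneHom.map_const_apply_eq (hC : IsClone C) (hξ : IsCloneHom C D ξ) {a : Ω}
    (ha : (fun _ : Fin 1 → Ω => a) ∈ C 1) (y y' : Fin 1 → Ω') :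
    ξ 1 (fun _ => a) y = ξ 1 (fun _ => a) y' := by
  have hcomp (i : Fin 2) : ξ 2 (fun _ => a) = fun x => ξ 1 (fun _ => a) fun _ => x i := by
    simpa only [hξ.2.1 2 i] using hξ.2.2 1 2 _ ha (fun _ x => x i) fun _ => hC.1 2 i
  have h := congrFun ((hcomp 0).symm.trans (hcomp 1)) ![y 0, y' 0]
  simp only [Matrix.cons_val_zero, Matrix.cons_val_one] at h
  rwa [show y = fun _ => y 0 from funext (Fin.forall_fin_one.2 rfl),
    show y' = fun _ => y' 0 from funext (Fin.forall_fin_one.2 rfl)]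

variable (ξ) in
/-- The map `κ`: `ξ c_a` is the constant function `c_{κ a}`; the point `o` only witnesses
`Nonempty Ω'`. -/
def constImage (o : Ω') (a : Ω) : Ω' :=
  ξ 1 (fun _ => a) fun _ => o

theorem IsCloneHom.map_const_eq (hC : IsClone C) (hξ : IsCloneHom C D ξ) (o : Ω') {a : Ω}
    (ha : (fun _ : Fin 1 → Ω => a) ∈ C 1) :
    ξ 1 (fun _ => a) = fun _ => constImage ξ o a :=
  funext fun y => hξ.map_const_apply_eq hC ha y _

theorem IsCloneHom.map_apply_comp_constImage (hC : IsClone C) (hξ : IsCloneHom C D ξ)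
    (hconst : ∀ a : Ω, (fun _ : Fin 1 → Ω => a) ∈ C 1) (o : Ω') {n : ℕ} {f : (Fin n → Ω) → Ω}
    (hf : f ∈ C n) (a : Fin n → Ω) :
    ξ n f (constImage ξ o ∘ a) = constImage ξ o (f a) := by
  have h := hξ.2.2 n 1 f hf (fun i _ => a i) fun i => hconst (a i)
  simp only [hξ.map_const_eq hC o (hconst _)] at h
  exact (congrFun h fun _ => o).symm

theorem IsCloneHom.constImage_injective (hC : IsClone C) (hξ : IsCloneHom C D ξ)
    (hconst : ∀ a : Ω, (fun _ : Fin 1 → Ω => a) ∈ C 1) (hinj : Set.InjOn (ξ 1) (C 1)) (o : Ω') :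
    Injective (constImage ξ o) := by
  intro a b hab
  have h : (fun _ : Fin 1 → Ω => a) = fun _ => b :=
    hinj (hconst a) (hconst b) <| by
      rw [hξ.map_const_eq hC o (hconst a), hξ.map_const_eq hC o (hconst b), hab]
  exact congrFun h fun _ => a

end

theorem continuous_of_injective_comp_eq {X Ω Ω' ι : Type*} [TopologicalSpace X]
    [TopologicalSpace Ω] [TopologicalSpace Ω'] [DiscreteTopology Ω'] {κ : Ω → Ω'}
    (hκ : Injective κ) {Φ : X → (ι → Ω) → Ω} {Ψ : X → (ι → Ω') → Ω'} (hΨ : Continuous Ψ)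
    (h : ∀ x a, κ (Φ x a) = Ψ x (κ ∘ a)) : Continuous Φ := by
  refine continuous_pi fun a => (IsLocallyConstant.desc _ κ ?_ hκ).continuous
  rw [show κ ∘ (Φ · a) = (Ψ · (κ ∘ a)) from funext (h · a), IsLocallyConstant.iff_continuous]
  exact (continuous_apply _).comp hΨ

theorem stmt_8_general {Ω Ω' : Type*} [TopologicalSpace Ω]
    [TopologicalSpace Ω'] [DiscreteTopology Ω']
    (C : ∀ n : ℕ, Set ((Fin n → Ω) → Ω)) (D : ∀ n : ℕ, Set ((Fin n → Ω') → Ω'))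
    (hC : IsClone C)
    (hconst : ∀ a : Ω, (fun _ : Fin 1 → Ω => a) ∈ C 1)
    (ξ : ∀ n : ℕ, ((Fin n → Ω) → Ω) → ((Fin n → Ω') → Ω'))
    (hξ : IsCloneHom C D ξ)
    (hbij : ∀ n : ℕ, Function.Bijective (Set.MapsTo.restrict (ξ n) (C n) (D n) (hξ.1 n))) :
    ∀ n : ℕ, IsOpenMap (Set.MapsTo.restrict (ξ n) (C n) (D n) (hξ.1 n)) := by
  intro n
  set e := Equiv.ofBijective _ (hbij n)
  refine IsOpenMap.of_inverse (f' := e.symm) ?_ e.apply_symm_apply e.symm_apply_apply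
  rcases isEmpty_or_nonempty Ω' with hΩ' | ⟨⟨o⟩⟩
  · -- `D n` is a subsingleton, hence discrete
    exact continuous_of_discreteTopology
  have hinj : Set.InjOn (ξ 1) (C 1) := (hξ.1 1).restrict_inj.1 (hbij 1).1
  refine continuous_induced_rng.2 <| continuous_of_injective_comp_eq
    (hξ.constImage_injective hC hconst hinj o) continuous_subtype_val fun g a => ?_
  rw [comp_apply, ← hξ.map_apply_comp_constImage hC hconst o (e.symm g).2]
  exact congrFun (congrArg Subtype.val (e.apply_symm_apply g)) _

/-- Let C be a function clone on Ω (pointwise convergence topology) containing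
all constant unary functions. Then every clone isomorphism ξ from C onto a closed function
clone D is an open map. -/
theorem stmt_8 {Ω Ω' : Type*} [TopologicalSpace Ω] [DiscreteTopology Ω]
    [TopologicalSpace Ω'] [DiscreteTopology Ω']
    (C : ∀ n : ℕ, Set ((Fin n → Ω) → Ω)) (D : ∀ n : ℕ, Set ((Fin n → Ω') → Ω'))
    (hC : IsClone C) (hD : IsClone D)
    (hDclosed : ∀ n : ℕ, IsClosed (D n))
    (hconst : ∀ a : Ω, (fun _ : Fin 1 → Ω => a) ∈ C 1)
    (ξ : ∀ n : ℕ, ((Fin n → Ω) → Ω) → ((Fin n → Ω') → Ω'))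
    (hξ : IsCloneHom C D ξ)
    (hbij : ∀ n : ℕ, Function.Bijective (Set.MapsTo.restrict (ξ n) (C n) (D n) (hξ.1 n))) :
    ∀ n : ℕ, IsOpenMap (Set.MapsTo.restrict (ξ n) (C n) (D n) (hξ.1 n)) :=
  stmt_8_general C D hC hconst ξ hξ hbij
end

section
/- Let Ω be a countable set and S a topologically closed submonoid of Ω^Ω (pointwise convergence topology) whose group of invertible elements G acts transitively on Ω with Ω infinite, and suppose G is dense in S. If S contains a non-surjective element, then there is a discontinuous monoid homomorphism from S to some closed submonoid of Ω^Ω; more concretely, S does not have automatic continuity with respect to the class of closed transformation monoids on Ω. -/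
open Set Function Filter


private def psi12 (m : ℕ∞) (x : Option ℕ) : Option ℕ :=
  match m with
  | ⊤ => none
  | (n : ℕ) => x.map (· + n)

private lemma psi12_zero : psi12 0 = id := by
  funext x
  show psi12 ((0 : ℕ) : ℕ∞) x = x
  cases x <;> rfl

private lemma psi12_add (m n : ℕ∞) : psi12 (m + n) = psi12 m ∘ psi12 n := by
  funext x
  induction m using WithTop.recTopCoe with
  | top => rfl
  | coe m =>
    induction n using WithTop.recTopCoe with
    | top => cases x <;> rfl
    | coe n =>
      show psi12 ((m + n : ℕ) : ℕ∞) x = _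
      cases x with
      | none => rfl
      | some k =>
        show some (k + (m + n)) = some (k + n + m)
        ring_nf

private lemma psi12_ne (m : ℕ∞) (hm : m ≠ 0) : psi12 m (some 0) ≠ some 0 := by
  induction m using WithTop.recTopCoe with
  | top => simp [psi12]
  | coe n =>
    intro h
    have h2 : (0 + n : ℕ) = 0 := Option.some_injective ℕ h
    simp only [Nat.zero_add] at h2
    exact hm (by subst h2; rfl)

private lemma defect_comp12 {Ω : Type*} (f g : Ω → Ω) (hf : Function.Injective f) :
    (Set.range (f ∘ g))ᶜ.encard = (Set.range f)ᶜ.encard + (Set.range g)ᶜ.encard := by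
  have h1 : (Set.range (f ∘ g))ᶜ = (Set.range f)ᶜ ∪ f '' (Set.range g)ᶜ := by
    ext x
    constructor
    · intro hx
      by_cases hxf : x ∈ Set.range f
      · obtain ⟨y, rfl⟩ := hxf
        refine Or.inr ⟨y, ?_, rfl⟩
        rintro ⟨z, rfl⟩
        exact hx ⟨z, rfl⟩
      · exact Or.inl hxf
    · rintro (hx | ⟨y, hy, rfl⟩) ⟨z, hz⟩
      · exact hx ⟨g z, hz⟩
      · exact hy ⟨z, hf hz⟩
  have hdisj : Disjoint ((Set.range f)ᶜ) (f '' (Set.range g)ᶜ) := by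
    rw [Set.disjoint_left]
    rintro x hx ⟨y, _, rfl⟩
    exact hx ⟨y, rfl⟩
  rw [h1, Set.encard_union_eq hdisj, hf.encard_image]

/-- Let S be a closed submonoid of Ω^Ω (Ω countably infinite, pointwise
convergence topology) whose group of invertible elements acts transitively and is dense
in S. If S contains a non-surjective element, then there is a discontinuous monoid
homomorphism from S to some closed submonoid of Ω^Ω; i.e., S does not have automatic
continuity with respect to closed transformation monoids on Ω. -/
theorem stmt_12 {Ω : Type*} [Countable Ω] [Infinite Ω]
    [TopologicalSpace Ω] [DiscreteTopology Ω]
    (S : Set (Ω → Ω)) (hid : id ∈ S)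
    (hcomp : ∀ f ∈ S, ∀ g ∈ S, f ∘ g ∈ S)
    (hSclosed : IsClosed S)
    (htrans : ∀ a b : Ω, ∃ f : Ω → Ω,
      (f ∈ S ∧ ∃ g ∈ S, f ∘ g = id ∧ g ∘ f = id) ∧ f a = b)
    (hdense : S ⊆ closure {f : Ω → Ω | f ∈ S ∧ ∃ g ∈ S, f ∘ g = id ∧ g ∘ f = id})
    (hnonsurj : ∃ f ∈ S, ¬ Function.Surjective f) :
    ∃ T : Set (Ω → Ω), id ∈ T ∧ (∀ f ∈ T, ∀ g ∈ T, f ∘ g ∈ T) ∧ IsClosed T ∧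
      ∃ φ : (Ω → Ω) → (Ω → Ω), Set.MapsTo φ S T ∧ φ id = id ∧
        (∀ f ∈ S, ∀ g ∈ S, φ (f ∘ g) = φ f ∘ φ g) ∧
        ¬ ContinuousOn φ S := by
  classical
  obtain ⟨e⟩ : Nonempty (Ω ≃ Option ℕ) := nonempty_equiv_of_countable
  -- every element of S is injective, since the invertibles are dense
  have hinj : ∀ f ∈ S, Function.Injective f := by
    intro f hf x y hxy
    by_contra hne
    have hopen : IsOpen {k : Ω → Ω | k x = f x ∧ k y = f y} := by
      have h1 : IsOpen {k : Ω → Ω | k x = f x} :=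
        (continuous_apply (A := fun _ : Ω => Ω) x).isOpen_preimage ({f x} : Set Ω)
          (isOpen_discrete _)
      have h2 : IsOpen {k : Ω → Ω | k y = f y} :=
        (continuous_apply (A := fun _ : Ω => Ω) y).isOpen_preimage ({f y} : Set Ω)
          (isOpen_discrete _)
      exact h1.inter h2
    obtain ⟨g, ⟨hgx, hgy⟩, hgS, g', hg'S, hgg', hg'g⟩ :=
      mem_closure_iff.mp (hdense hf) _ hopen ⟨rfl, rfl⟩
    have hginj : Function.Injective g :=
      Function.LeftInverse.injective (g := g') (fun z => congrFun hg'g z)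
    exact hne (hginj (hgx.trans (hxy.trans hgy.symm)))
  set d : (Ω → Ω) → ℕ∞ := fun f => (Set.range f)ᶜ.encard with hd
  set φ : (Ω → Ω) → (Ω → Ω) := fun f => e.symm ∘ psi12 (d f) ∘ e with hφ
  have hd0 : d id = 0 := by
    simp [hd, Set.range_id]
  have hφid : φ id = id := by
    funext x
    simp [hφ, hd0, psi12_zero]
  refine ⟨Set.univ, Set.mem_univ _, fun _ _ _ _ => Set.mem_univ _, isClosed_univ,
    φ, fun _ _ => Set.mem_univ _, hφid, ?_, ?_⟩
  · -- multiplicativity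
    intro f hf g hg
    have hdc : d (f ∘ g) = d f + d g := defect_comp12 f g (hinj f hf)
    funext x
    show e.symm (psi12 (d (f ∘ g)) (e x)) = e.symm (psi12 (d f) (e (e.symm (psi12 (d g) (e x)))))
    rw [Equiv.apply_symm_apply, hdc, psi12_add]
    rfl
  · -- discontinuity
    obtain ⟨f₀, hf₀S, hf₀⟩ := hnonsurj
    obtain ⟨u, hu⟩ := exists_surjective_nat Ω
    have H : ∀ n : ℕ, ∃ h : Ω → Ω, h ∈ S ∧ (∀ i ≤ n, h (u i) = u i) ∧
        ¬ Function.Surjective h := by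
      intro n
      have hopen : IsOpen {k : Ω → Ω | ∀ i ≤ n, k (u i) = f₀ (u i)} := by
        have heq : {k : Ω → Ω | ∀ i ≤ n, k (u i) = f₀ (u i)} =
            ⋂ i ∈ Set.Iic n, {k : Ω → Ω | k (u i) = f₀ (u i)} := by
          ext k
          simp [Set.mem_iInter, Set.mem_Iic]
        rw [heq]
        exact (Set.finite_Iic n).isOpen_biInter fun i _ =>
          (continuous_apply (A := fun _ : Ω => Ω) (u i)).isOpen_preimage
            ({f₀ (u i)} : Set Ω) (isOpen_discrete _)
      obtain ⟨g, hgA, hgS, g', hg'S, hgg', hg'g⟩ :=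
        mem_closure_iff.mp (hdense hf₀S) _ hopen (fun i _ => rfl)
      refine ⟨g' ∘ f₀, hcomp g' hg'S f₀ hf₀S, ?_, ?_⟩
      · intro i hi
        show g' (f₀ (u i)) = u i
        rw [← hgA i hi]
        exact congrFun hg'g (u i)
      · intro hsurj
        apply hf₀
        have hg'inj : Function.Injective g' :=
          Function.LeftInverse.injective (g := g) (fun z => congrFun hgg' z)
        intro y
        obtain ⟨x, hx⟩ := hsurj (g' y)
        exact ⟨x, hg'inj hx⟩
    choose h hS hA hns using H
    set p : Ω := e.symm (some 0) with hp
    intro hcont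
    have htend : Filter.Tendsto h Filter.atTop (nhds id) := by
      rw [tendsto_pi_nhds]
      intro x
      obtain ⟨k, rfl⟩ := hu x
      refine Filter.Tendsto.congr' ?_ (tendsto_const_nhds (x := u k))
      filter_upwards [Filter.eventually_ge_atTop k] with n hn
      exact (hA n k hn).symm
    have htendW : Filter.Tendsto h Filter.atTop (nhdsWithin id S) :=
      tendsto_nhdsWithin_iff.mpr ⟨htend, Filter.Eventually.of_forall hS⟩
    have h1 : Filter.Tendsto (fun n => φ (h n)) Filter.atTop (nhds id) := by
      have := (hcont id hid).tendsto.comp htendW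
      rwa [hφid] at this
    have h2 : Filter.Tendsto (fun n => φ (h n) p) Filter.atTop (nhds p) := by
      have := ((continuous_apply p).tendsto (id : Ω → Ω)).comp h1
      exact this
    have h3 : ∀ᶠ n in Filter.atTop, φ (h n) p = p := by
      have hmem : ∀ᶠ y in nhds p, y ∈ ({p} : Set Ω) :=
        (isOpen_discrete {p}).eventually_mem rfl
      exact h2.eventually hmem
    obtain ⟨n, hn⟩ := h3.exists
    have hdn : d (h n) ≠ 0 := by
      rw [hd]
      simp only []
      rw [Set.encard_ne_zero, Set.nonempty_compl]
      intro hr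
      exact hns n (Set.range_eq_univ.mp hr)
    apply psi12_ne _ hdn
    have hval : φ (h n) p = e.symm (psi12 (d (h n)) (some 0)) := by
      show e.symm (psi12 (d (h n)) (e (e.symm (some 0)))) = _
      rw [Equiv.apply_symm_apply]
    rw [hval, hp] at hn
    exact e.symm.injective hn
end

section
/- Let G be a closed subgroup of the symmetric group on a countable set Ω, with closure Ḡ of G taken in Ω^Ω. Suppose: (i) every group isomorphism from G onto a closed subgroup of the symmetric group on a countable set is a homeomorphism, and (ii) the only injective monoid endomorphism of Ḡ fixing G pointwise is the identity. Then every monoid isomorphism from Ḡ onto a closed submonoid of Ω'^Ω' (Ω' countable) is a homeomorphism. -/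
/-- The set of functions underlying a subgroup of the symmetric group on Ω. -/
def permSet {Ω : Type*} (G : Subgroup (Equiv.Perm Ω)) : Set (Ω → Ω) :=
  {f : Ω → Ω | ∃ g ∈ G, ⇑g = f}

theorem stmt13aux.mem_closure_pi_iff {α β : Type*} [TopologicalSpace β] [DiscreteTopology β]
    {S : Set (α → β)} {f : α → β} :
    f ∈ closure S ↔ ∀ F : Finset α, ∃ s ∈ S, ∀ x ∈ F, s x = f x := by
  constructor
  · intro h F
    have hU : IsOpen {g : α → β | ∀ x ∈ F, g x = f x} := by
      have he : {g : α → β | ∀ x ∈ F, g x = f x} = Set.pi ↑F (fun x => {f x}) := by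
        ext g; simp [Set.mem_pi]
      rw [he]
      exact isOpen_set_pi F.finite_toSet (fun x _ => isOpen_discrete _)
    obtain ⟨s, hs1, hs2⟩ := mem_closure_iff.mp h _ hU (by simp)
    exact ⟨s, hs2, hs1⟩
  · intro h
    rw [mem_closure_iff]
    intro U hU hfU
    obtain ⟨I, u, hu, hsub⟩ := isOpen_pi_iff.mp hU f hfU
    obtain ⟨s, hsS, hs⟩ := h I
    refine ⟨s, hsub ?_, hsS⟩
    intro x hx
    rw [hs x hx]
    exact (hu x hx).2

theorem stmt13aux.exists_extension {α β : Type*} [TopologicalSpace α] [DiscreteTopology α]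
    [TopologicalSpace β] [DiscreteTopology β]
    (A : Set (α → α)) (B : Set (β → β))
    (hAid : id ∈ A)
    (hAcomp : ∀ a ∈ A, ∀ b ∈ A, a ∘ b ∈ A)
    (hAinv : ∀ a ∈ A, ∃ b ∈ A, a ∘ b = id ∧ b ∘ a = id)
    (hBbij : ∀ b ∈ B, Function.Bijective b)
    (e : ↥A → ↥B)
    (hemul : ∀ a b c : ↥A, c.1 = a.1 ∘ b.1 → (e c).1 = (e a).1 ∘ (e b).1)
    (hecont : Continuous e) :
    ∃ E : ↥(closure A) → β → β,
      Continuous E ∧ (∀ a, E a ∈ closure B) ∧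
      (∀ (a : α → α) (ha : a ∈ A) (ha' : a ∈ closure A), E ⟨a, ha'⟩ = (e ⟨a, ha⟩).1) ∧
      (∀ a b c : ↥(closure A), c.1 = a.1 ∘ b.1 → E c = E a ∘ E b) := by
  classical
  -- e maps the identity to the identity
  have e1 : (e ⟨id, hAid⟩).1 = id := by
    have h := hemul ⟨id, hAid⟩ ⟨id, hAid⟩ ⟨id, hAid⟩ rfl
    have hinj := (hBbij _ (e ⟨id, hAid⟩).2).1
    funext x
    exact hinj (congrFun h x).symm
  -- key uniform continuity fact
  have key : ∀ y : β, ∃ F : Finset α, ∀ g h : ↥A,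
      (∀ x ∈ F, g.1 x = h.1 x) → (e g).1 y = (e h).1 y := by
    intro y
    have cont : Continuous (fun g : ↥A => (e g).1 y) :=
      (continuous_apply y).comp (continuous_subtype_val.comp hecont)
    have hO : IsOpen ((fun g : ↥A => (e g).1 y) ⁻¹' {y}) :=
      cont.isOpen_preimage _ (isOpen_discrete _)
    obtain ⟨V, hV, hVeq⟩ := isOpen_induced_iff.mp hO
    have hidV : (id : α → α) ∈ V := by
      have : (⟨id, hAid⟩ : ↥A) ∈ (fun g : ↥A => (e g).1 y) ⁻¹' {y} := by
        simp [e1]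
      rw [← hVeq] at this
      exact this
    obtain ⟨I, u, hu, hsub⟩ := isOpen_pi_iff.mp hV id hidV
    refine ⟨I, ?_⟩
    have claim0 : ∀ k : ↥A, (∀ x ∈ I, k.1 x = x) → (e k).1 y = y := by
      intro k hk
      have : k.1 ∈ V := hsub (fun x hx => by rw [hk x hx]; exact (hu x hx).2)
      have : k ∈ (fun g : ↥A => (e g).1 y) ⁻¹' {y} := by rw [← hVeq]; exact this
      simpa using this
    intro g h hgh
    obtain ⟨h', hh'A, hh1, hh2⟩ := hAinv h.1 h.2
    set k : ↥A := ⟨h' ∘ g.1, hAcomp _ hh'A _ g.2⟩ with hk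
    have hky : (e k).1 y = y := by
      apply claim0
      intro x hx
      show h' (g.1 x) = x
      rw [hgh x hx]
      exact congrFun hh2 x
    have hgdec : g.1 = h.1 ∘ k.1 := by
      funext x
      show g.1 x = h.1 (h' (g.1 x))
      exact (congrFun hh1 (g.1 x)).symm
    have := hemul h k g hgdec
    rw [this]
    show (e h).1 ((e k).1 y) = (e h).1 y
    rw [hky]
  choose F keyF using key
  -- approximation of closure elements by A-elements
  have approx : ∀ (a : ↥(closure A)) (J : Finset α), ∃ g : ↥A, ∀ x ∈ J, g.1 x = a.1 x := by
    intro a J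
    obtain ⟨s, hs, h⟩ := stmt13aux.mem_closure_pi_iff.mp a.2 J
    exact ⟨⟨s, hs⟩, h⟩
  choose ga hga using approx
  set E : ↥(closure A) → β → β := fun a y => (e (ga a (F y))).1 y with hE
  have gen : ∀ (a : ↥(closure A)) (y : β) (k : ↥A),
      (∀ x ∈ F y, k.1 x = a.1 x) → E a y = (e k).1 y := by
    intro a y k hk
    exact keyF y _ k (fun x hx => (hga a (F y) x hx).trans (hk x hx).symm)
  refine ⟨E, ?_, ?_, ?_, ?_⟩
  · -- continuity
    apply continuous_pi
    intro y
    rw [continuous_iff_continuousAt]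
    intro a
    have hW : IsOpen (Subtype.val ⁻¹' (Set.pi ↑(F y) (fun x => {a.1 x})) :
        Set ↥(closure A)) :=
      (isOpen_set_pi (F y).finite_toSet (fun x _ => isOpen_discrete _)).preimage
        continuous_subtype_val
    have haW : a ∈ Subtype.val ⁻¹' (Set.pi ↑(F y) (fun x => {a.1 x})) := by
      simp [Set.mem_pi]
    have hev : ∀ᶠ b in nhds a, (fun b => E b y) b = E a y := by
      refine Filter.eventually_of_mem (hW.mem_nhds haW) ?_
      intro b hb
      have hb' : ∀ x ∈ F y, b.1 x = a.1 x := by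
        intro x hx
        have := hb
        simp only [Set.mem_preimage, Set.mem_pi, Finset.mem_coe, Set.mem_singleton_iff] at this
        exact this x hx
      have h1 : E b y = (e (ga a (F y))).1 y :=
        gen b y (ga a (F y)) (fun x hx => (hga a (F y) x hx).trans (hb' x hx).symm)
      exact h1
    exact (Filter.tendsto_pure.mpr hev).mono_right (pure_le_nhds _)
  · -- image in closure B
    intro a
    rw [stmt13aux.mem_closure_pi_iff]
    intro J
    set K := J.biUnion F with hK
    refine ⟨(e (ga a K)).1, (e (ga a K)).2, ?_⟩
    intro y hy
    exact (gen a y (ga a K) (fun x hx => hga a K x (Finset.mem_biUnion.mpr ⟨y, hy, hx⟩))).symm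
  · -- extends e
    intro a ha ha'
    funext y
    exact gen ⟨a, ha'⟩ y ⟨a, ha⟩ (fun x _ => rfl)
  · -- multiplicative
    intro a b c hc
    funext y
    set h := ga b (F y) with hh
    have hby : E b y = (e h).1 y := rfl
    set y2 := E b y with hy2
    set J := F y2 ∪ (F y).image h.1 with hJ
    set g₀ := ga a J with hg0
    have hg0a : ∀ x ∈ J, g₀.1 x = a.1 x := hga a J
    have h1 : E a y2 = (e g₀).1 y2 :=
      gen a y2 g₀ (fun x hx => hg0a x (Finset.mem_union_left _ hx))
    have hk : (g₀.1 ∘ h.1) ∈ A := hAcomp _ g₀.2 _ h.2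
    have h2 : ∀ x ∈ F y, (⟨g₀.1 ∘ h.1, hk⟩ : ↥A).1 x = c.1 x := by
      intro x hx
      show g₀.1 (h.1 x) = c.1 x
      rw [hg0a (h.1 x) (Finset.mem_union_right _ (Finset.mem_image_of_mem _ hx))]
      rw [hga b (F y) x hx]
      exact (congrFun hc x).symm
    have h3 : E c y = (e ⟨g₀.1 ∘ h.1, hk⟩).1 y := gen c y _ h2
    have h4 : (e (⟨g₀.1 ∘ h.1, hk⟩ : ↥A)).1 = (e g₀).1 ∘ (e h).1 := hemul g₀ h _ rfl
    show E c y = E a (E b y)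
    rw [h3, h4]
    show (e g₀).1 ((e h).1 y) = E a (E b y)
    rw [← hby, ← hy2, ← h1]

/-- Let G be a closed subgroup of the symmetric group on a countable set Ω,
with closure Ḡ in Ω^Ω. Suppose (i) every group isomorphism from G onto a closed subgroup of
the symmetric group on a countable set is a homeomorphism, and (ii) the only injective
monoid endomorphism of Ḡ fixing G pointwise is the identity. Then every monoid isomorphism
from Ḡ onto a closed submonoid of Ω'^Ω' (Ω' countable) is a homeomorphism. -/
theorem stmt_13 {Ω : Type*} [Countable Ω] [TopologicalSpace Ω] [DiscreteTopology Ω]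
    (G : Subgroup (Equiv.Perm Ω))
    (hGclosed : ∀ f : Ω → Ω, f ∈ closure (permSet G) → Function.Bijective f →
      f ∈ permSet G)
    -- (i): automatic homeomorphicity of G with respect to closed permutation groups
    (hAHgroup : ∀ (Ω' : Type) [Countable Ω'] [TopologicalSpace Ω'] [DiscreteTopology Ω']
      (Hs : Set (Ω' → Ω')),
      (∀ h ∈ Hs, Function.Bijective h) → id ∈ Hs →
      (∀ a ∈ Hs, ∀ b ∈ Hs, a ∘ b ∈ Hs) →
      (∀ a ∈ Hs, ∃ b ∈ Hs, a ∘ b = id ∧ b ∘ a = id) →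
      (∀ f : Ω' → Ω', f ∈ closure Hs → Function.Bijective f → f ∈ Hs) →
      ∀ θ : ↥(permSet G) ≃ ↥Hs,
        (∀ a b c : ↥(permSet G), c.1 = a.1 ∘ b.1 → (θ c).1 = (θ a).1 ∘ (θ b).1) →
        Continuous θ ∧ Continuous θ.symm)
    -- (ii): the only injective monoid endomorphism of Ḡ fixing G pointwise is the identity
    (hrigid : ∀ Φ : ↥(closure (permSet G)) → ↥(closure (permSet G)),
      Function.Injective Φ →
      (∀ a b c : ↥(closure (permSet G)), c.1 = a.1 ∘ b.1 → (Φ c).1 = (Φ a).1 ∘ (Φ b).1) →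
      (∀ a : ↥(closure (permSet G)), a.1 ∈ permSet G → Φ a = a) →
      ∀ a, Φ a = a) :
    ∀ (Ω' : Type) [Countable Ω'] [TopologicalSpace Ω'] [DiscreteTopology Ω']
      (T : Set (Ω' → Ω')), id ∈ T → (∀ a ∈ T, ∀ b ∈ T, a ∘ b ∈ T) → IsClosed T →
      ∀ θ : ↥(closure (permSet G)) ≃ ↥T,
        (∀ a b c : ↥(closure (permSet G)), c.1 = a.1 ∘ b.1 →
          (θ c).1 = (θ a).1 ∘ (θ b).1) →
        Continuous θ ∧ Continuous θ.symm := by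
  intro Ω' _ _ _ T hidT hTcomp hTclosed θ hθ
  classical
  -- basic facts about P := permSet G
  have hPid : id ∈ permSet G := ⟨1, G.one_mem, Equiv.Perm.coe_one⟩
  have hPcomp : ∀ a ∈ permSet G, ∀ b ∈ permSet G, a ∘ b ∈ permSet G := by
    rintro a ⟨g, hg, rfl⟩ b ⟨h, hh, rfl⟩
    exact ⟨g * h, G.mul_mem hg hh, rfl⟩
  have hPinv : ∀ a ∈ permSet G, ∃ b ∈ permSet G, a ∘ b = id ∧ b ∘ a = id := by
    rintro a ⟨g, hg, rfl⟩
    refine ⟨⇑g⁻¹, ⟨g⁻¹, G.inv_mem hg, rfl⟩, ?_, ?_⟩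
    · funext x; simp
    · funext x; simp
  have hPbij : ∀ f ∈ permSet G, Function.Bijective f := by
    rintro f ⟨g, _, rfl⟩; exact g.bijective
  have hMid : id ∈ closure (permSet G) := subset_closure hPid
  -- closure of P is closed under composition
  have hMcomp : ∀ a ∈ closure (permSet G), ∀ b ∈ closure (permSet G),
      a ∘ b ∈ closure (permSet G) := by
    intro a ha b hb
    rw [stmt13aux.mem_closure_pi_iff]
    intro J
    obtain ⟨h, hhP, hh⟩ := stmt13aux.mem_closure_pi_iff.mp hb J
    obtain ⟨g, hgP, hg⟩ := stmt13aux.mem_closure_pi_iff.mp ha (J.image b)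
    refine ⟨g ∘ h, hPcomp g hgP h hhP, ?_⟩
    intro x hx
    show g (h x) = a (b x)
    rw [hh x hx]
    exact hg (b x) (Finset.mem_image_of_mem b hx)
  -- θ maps the identity to the identity
  have hθid : (θ ⟨id, hMid⟩).1 = id := by
    set u := θ.symm ⟨id, hidT⟩ with hu
    have hu1 : (θ u).1 = id := by rw [hu, Equiv.apply_symm_apply]
    have h := hθ u ⟨id, hMid⟩ u rfl
    rw [hu1] at h
    calc (θ ⟨id, hMid⟩).1 = id ∘ (θ ⟨id, hMid⟩).1 := rfl
      _ = id := h.symm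
  -- general fact: θ.symm is multiplicative
  have hθsymm : ∀ s t u : ↥T, u.1 = s.1 ∘ t.1 →
      (θ.symm u).1 = (θ.symm s).1 ∘ (θ.symm t).1 := by
    intro s t u h
    have hm : (θ.symm s).1 ∘ (θ.symm t).1 ∈ closure (permSet G) :=
      hMcomp _ (θ.symm s).2 _ (θ.symm t).2
    have h2 : θ ⟨_, hm⟩ = u := by
      apply Subtype.ext
      rw [hθ (θ.symm s) (θ.symm t) ⟨_, hm⟩ rfl, Equiv.apply_symm_apply,
        Equiv.apply_symm_apply]
      exact h.symm
    have h3 := congrArg θ.symm h2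
    rw [Equiv.symm_apply_apply] at h3
    rw [← h3]
  have hθsymmid : θ.symm ⟨id, hidT⟩ = ⟨id, hMid⟩ := by
    have : θ ⟨id, hMid⟩ = ⟨id, hidT⟩ := Subtype.ext hθid
    rw [← this, Equiv.symm_apply_apply]
  -- Hs : the group of invertible elements of T
  set Hs : Set (Ω' → Ω') :=
    {f | ∃ finv, f ∈ T ∧ finv ∈ T ∧ f ∘ finv = id ∧ finv ∘ f = id} with hHsdef
  have hHsT : Hs ⊆ T := by rintro f ⟨finv, hf, _, _, _⟩; exact hf
  have hHsbij : ∀ f ∈ Hs, Function.Bijective f := by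
    rintro f ⟨finv, _, _, h1, h2⟩
    exact Function.bijective_iff_has_inverse.mpr
      ⟨finv, fun x => congrFun h2 x, fun x => congrFun h1 x⟩
  have hHsid : id ∈ Hs := ⟨id, hidT, hidT, rfl, rfl⟩
  have hHsinv : ∀ a ∈ Hs, ∃ b ∈ Hs, a ∘ b = id ∧ b ∘ a = id := by
    rintro a ⟨a', ha, ha', h1, h2⟩
    exact ⟨a', ⟨a, ha', ha, h2, h1⟩, h1, h2⟩
  have hHscomp : ∀ a ∈ Hs, ∀ b ∈ Hs, a ∘ b ∈ Hs := by
    rintro a ⟨a', ha, ha', ha1, ha2⟩ b ⟨b', hb, hb', hb1, hb2⟩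
    refine ⟨b' ∘ a', hTcomp a ha b hb, hTcomp b' hb' a' ha', ?_, ?_⟩
    · funext x
      show a (b (b' (a' x))) = x
      rw [show b (b' (a' x)) = a' x from congrFun hb1 (a' x)]
      exact congrFun ha1 x
    · funext x
      show b' (a' (a (b x))) = x
      rw [show a' (a (b x)) = b x from congrFun ha2 (b x)]
      exact congrFun hb2 x
  have hclHsT : closure Hs ⊆ T := closure_minimal hHsT hTclosed
  have hHsclosed : ∀ f : Ω' → Ω', f ∈ closure Hs → Function.Bijective f → f ∈ Hs := by
    intro f hfcl hfbij
    obtain ⟨fi, hfi1, hfi2⟩ := Function.bijective_iff_has_inverse.mp hfbij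
    have hficl : fi ∈ closure Hs := by
      rw [stmt13aux.mem_closure_pi_iff]
      intro J
      obtain ⟨s, hsHs, hs⟩ := stmt13aux.mem_closure_pi_iff.mp hfcl (J.image fi)
      obtain ⟨s', hs'Hs, hss1, hss2⟩ := hHsinv s hsHs
      refine ⟨s', hs'Hs, ?_⟩
      intro y hy
      have h1 : s (fi y) = y := by
        rw [hs (fi y) (Finset.mem_image_of_mem fi hy)]
        exact hfi2 y
      calc s' y = s' (s (fi y)) := by rw [h1]
        _ = fi y := congrFun hss2 (fi y)
    exact ⟨fi, hclHsT hfcl, hclHsT hficl, funext hfi2, funext hfi1⟩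
  -- θ restricts to an isomorphism from P onto Hs
  have toHs : ∀ p : ↥(permSet G), (θ ⟨p.1, subset_closure p.2⟩).1 ∈ Hs := by
    rintro ⟨p, g, hg, rfl⟩
    have hq : ⇑g⁻¹ ∈ permSet G := ⟨g⁻¹, G.inv_mem hg, rfl⟩
    set a : ↥(closure (permSet G)) := ⟨⇑g, subset_closure ⟨g, hg, rfl⟩⟩
    set b : ↥(closure (permSet G)) := ⟨⇑g⁻¹, subset_closure hq⟩
    have h1 : (θ ⟨id, hMid⟩).1 = (θ a).1 ∘ (θ b).1 :=
      hθ a b ⟨id, hMid⟩ (by funext x; show x = g (g⁻¹ x); simp)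
    have h2 : (θ ⟨id, hMid⟩).1 = (θ b).1 ∘ (θ a).1 :=
      hθ b a ⟨id, hMid⟩ (by funext x; show x = g⁻¹ (g x); simp)
    rw [hθid] at h1 h2
    exact ⟨(θ b).1, (θ a).2, (θ b).2, h1.symm, h2.symm⟩
  have toP : ∀ s : ↥Hs, (θ.symm ⟨s.1, hHsT s.2⟩).1 ∈ permSet G := by
    rintro ⟨s, s', hsT, hs'T, h1, h2⟩
    set t := θ.symm ⟨s, hsT⟩
    set t' := θ.symm ⟨s', hs'T⟩
    have ht1 : (θ.symm ⟨id, hidT⟩).1 = t.1 ∘ t'.1 :=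
      hθsymm ⟨s, hsT⟩ ⟨s', hs'T⟩ ⟨id, hidT⟩ h1.symm
    have ht2 : (θ.symm ⟨id, hidT⟩).1 = t'.1 ∘ t.1 :=
      hθsymm ⟨s', hs'T⟩ ⟨s, hsT⟩ ⟨id, hidT⟩ h2.symm
    rw [hθsymmid] at ht1 ht2
    have hbij : Function.Bijective t.1 :=
      Function.bijective_iff_has_inverse.mpr
        ⟨t'.1, fun x => (congrFun ht2 x).symm, fun x => (congrFun ht1 x).symm⟩
    exact hGclosed t.1 t.2 hbij
  set θ₀ : ↥(permSet G) ≃ ↥Hs :=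
    { toFun := fun p => ⟨(θ ⟨p.1, subset_closure p.2⟩).1, toHs p⟩
      invFun := fun s => ⟨(θ.symm ⟨s.1, hHsT s.2⟩).1, toP s⟩
      left_inv := by
        intro p
        apply Subtype.ext
        show (θ.symm ⟨(θ ⟨p.1, subset_closure p.2⟩).1, _⟩).1 = p.1
        have : (⟨(θ ⟨p.1, subset_closure p.2⟩).1, hHsT (toHs p)⟩ : ↥T) =
            θ ⟨p.1, subset_closure p.2⟩ := Subtype.ext rfl
        rw [this, Equiv.symm_apply_apply]
      right_inv := by
        intro s
        apply Subtype.ext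
        show (θ ⟨(θ.symm ⟨s.1, hHsT s.2⟩).1, _⟩).1 = s.1
        have : (⟨(θ.symm ⟨s.1, hHsT s.2⟩).1, subset_closure (toP s)⟩ :
            ↥(closure (permSet G))) = θ.symm ⟨s.1, hHsT s.2⟩ := Subtype.ext rfl
        rw [this, Equiv.apply_symm_apply] } with hθ₀def
  have hθ₀val : ∀ p : ↥(permSet G), (θ₀ p).1 = (θ ⟨p.1, subset_closure p.2⟩).1 :=
    fun p => rfl
  have hθ₀mul : ∀ a b c : ↥(permSet G), c.1 = a.1 ∘ b.1 →
      (θ₀ c).1 = (θ₀ a).1 ∘ (θ₀ b).1 := by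
    intro a b c hc
    exact hθ ⟨a.1, subset_closure a.2⟩ ⟨b.1, subset_closure b.2⟩
      ⟨c.1, subset_closure c.2⟩ hc
  obtain ⟨hθ₀cont, hθ₀symmcont⟩ :=
    hAHgroup Ω' Hs hHsbij hHsid hHscomp hHsinv hHsclosed θ₀ hθ₀mul
  have hθ₀symmmul : ∀ a b c : ↥Hs, c.1 = a.1 ∘ b.1 →
      (θ₀.symm c).1 = (θ₀.symm a).1 ∘ (θ₀.symm b).1 := by
    intro a b c h
    have hm : (θ₀.symm a).1 ∘ (θ₀.symm b).1 ∈ permSet G :=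
      hPcomp _ (θ₀.symm a).2 _ (θ₀.symm b).2
    have h2 : θ₀ ⟨_, hm⟩ = c := by
      apply Subtype.ext
      rw [hθ₀mul (θ₀.symm a) (θ₀.symm b) ⟨_, hm⟩ rfl, Equiv.apply_symm_apply,
        Equiv.apply_symm_apply]
      exact h.symm
    have h3 := congrArg θ₀.symm h2
    rw [Equiv.symm_apply_apply] at h3
    rw [← h3]
  -- extend θ₀ and θ₀.symm by continuity
  obtain ⟨E, hEcont, hEclos, hEext, hEmul⟩ :=
    stmt13aux.exists_extension (permSet G) Hs hPid hPcomp hPinv hHsbij θ₀ hθ₀mul hθ₀cont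
  obtain ⟨E', hE'cont, hE'clos, hE'ext, hE'mul⟩ :=
    stmt13aux.exists_extension Hs (permSet G) hHsid hHscomp hHsinv hPbij θ₀.symm
      hθ₀symmmul hθ₀symmcont
  -- E' ∘ E is the identity, by density
  have hEP : ∀ (a : ↥(closure (permSet G))) (ha : a.1 ∈ permSet G),
      E a = (θ₀ ⟨a.1, ha⟩).1 := by
    intro a ha
    have := hEext a.1 ha a.2
    exact this
  have retract : ∀ a : ↥(closure (permSet G)),
      E' ⟨E a, hEclos a⟩ = a.1 := by
    have hdense : Dense {a : ↥(closure (permSet G)) | a.1 ∈ permSet G} := by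
      rw [dense_iff_inter_open]
      rintro U hU ⟨a, haU⟩
      obtain ⟨V, hV, hVeq⟩ := isOpen_induced_iff.mp hU
      have haV : a.1 ∈ V := by rw [← hVeq] at haU; exact haU
      obtain ⟨p, hpV, hpP⟩ := mem_closure_iff.mp a.2 V hV haV
      refine ⟨⟨p, subset_closure hpP⟩, ?_, hpP⟩
      rw [← hVeq]
      exact hpV
    have hcont1 : Continuous (fun a : ↥(closure (permSet G)) =>
        E' ⟨E a, hEclos a⟩) := hE'cont.comp (hEcont.subtype_mk _)
    have heq : Set.EqOn (fun a : ↥(closure (permSet G)) => E' ⟨E a, hEclos a⟩)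
        (fun a => a.1) {a | a.1 ∈ permSet G} := by
      intro a ha
      show E' ⟨E a, hEclos a⟩ = a.1
      set s := θ₀ ⟨a.1, ha⟩ with hs
      have h1 : (⟨E a, hEclos a⟩ : ↥(closure Hs)) = ⟨s.1, subset_closure s.2⟩ :=
        Subtype.ext (hEP a ha)
      rw [h1, hE'ext s.1 s.2 (subset_closure s.2)]
      show (θ₀.symm s).1 = a.1
      rw [hs, Equiv.symm_apply_apply]
    have := Continuous.ext_on hdense hcont1 continuous_subtype_val heq
    exact fun a => congrFun this a
  -- Φ := θ.symm ∘ E is an injective multiplicative self-map fixing G, hence identity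
  set Φ : ↥(closure (permSet G)) → ↥(closure (permSet G)) :=
    fun a => θ.symm ⟨E a, hclHsT (hEclos a)⟩ with hΦdef
  have hΦinj : Function.Injective Φ := by
    intro a b h
    have h1 : (⟨E a, hclHsT (hEclos a)⟩ : ↥T) = ⟨E b, hclHsT (hEclos b)⟩ := by
      have := congrArg θ h
      rwa [hΦdef, Equiv.apply_symm_apply, Equiv.apply_symm_apply] at this
    have h2 : E a = E b := congrArg Subtype.val h1
    apply Subtype.ext
    rw [← retract a, ← retract b]
    exact congrArg E' (Subtype.ext h2)
  have hΦmul : ∀ a b c : ↥(closure (permSet G)), c.1 = a.1 ∘ b.1 →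
      (Φ c).1 = (Φ a).1 ∘ (Φ b).1 := by
    intro a b c hc
    exact hθsymm ⟨E a, hclHsT (hEclos a)⟩ ⟨E b, hclHsT (hEclos b)⟩
      ⟨E c, hclHsT (hEclos c)⟩ (hEmul a b c hc)
  have hΦfix : ∀ a : ↥(closure (permSet G)), a.1 ∈ permSet G → Φ a = a := by
    intro a ha
    have h1 : E a = (θ a).1 := by
      rw [hEP a ha, hθ₀val]
    show θ.symm ⟨E a, hclHsT (hEclos a)⟩ = a
    have h2 : (⟨E a, hclHsT (hEclos a)⟩ : ↥T) = θ a := Subtype.ext h1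
    rw [h2, Equiv.symm_apply_apply]
  have hΦid := hrigid Φ hΦinj hΦmul hΦfix
  -- hence θ coincides with E
  have hθE : ∀ a : ↥(closure (permSet G)), (θ a).1 = E a := by
    intro a
    have h1 : θ.symm ⟨E a, hclHsT (hEclos a)⟩ = a := hΦid a
    have := congrArg θ h1
    rw [Equiv.apply_symm_apply] at this
    rw [← this]
  constructor
  · -- continuity of θ
    have h1 : ⇑θ = fun a => (⟨E a, hclHsT (hEclos a)⟩ : ↥T) :=
      funext fun a => Subtype.ext (hθE a)
    rw [h1]
    exact hEcont.subtype_mk _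
  · -- continuity of θ.symm
    have hTcl : ∀ u : ↥T, u.1 ∈ closure Hs := by
      intro u
      have h1 : u.1 = E (θ.symm u) := by
        rw [← hθE (θ.symm u), Equiv.apply_symm_apply]
      rw [h1]
      exact hEclos _
    have hsymmE' : ∀ u : ↥T, (θ.symm u).1 = E' ⟨u.1, hTcl u⟩ := by
      intro u
      have h1 : u.1 = E (θ.symm u) := by
        rw [← hθE (θ.symm u), Equiv.apply_symm_apply]
      have h2 : (⟨u.1, hTcl u⟩ : ↥(closure Hs)) =
          ⟨E (θ.symm u), hEclos (θ.symm u)⟩ := Subtype.ext h1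
      rw [h2, retract (θ.symm u)]
    have h1 : ⇑θ.symm = fun u : ↥T =>
        (⟨E' ⟨u.1, hTcl u⟩, hE'clos _⟩ : ↥(closure (permSet G))) :=
      funext fun u => Subtype.ext (hsymmE' u)
    rw [h1]
    exact (hE'cont.comp (continuous_subtype_val.subtype_mk _)).subtype_mk _
end

section
/- Let C and D be closed function clones on sets Ω and Ω' with C weakly directed (for all a, b ∈ Ω there exist unary f, g ∈ C and c ∈ Ω with f(c) = a, g(c) = b). If ξ : C → D is a clone isomorphism whose restriction to unary functions is an open map (with respect to the pointwise convergence topologies), then ξ is an open map. -/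
/-!
A basic open set of `n`-ary functions is a finite intersection of sets `{f | f a = b}`, so it
suffices that `ξ` maps each of these to an open set. By weak directedness the tuple
`a : Fin n → Ω` is the value at a single point `c` of unary functions `e i ∈ C`, so
`{f | f a = b}` is the preimage of the unary basic open set `{h | h c = b}` under the
continuous map `f ↦ f ∘ (e₁, …, eₙ)`. Since `ξ` commutes with composition, the image of this
preimage is the preimage of the (open) image of `{h | h c = b}` under `g ↦ g ∘ (ξ e₁, …, ξ eₙ)`.
-/

open Set Function

theorem Set.image_preimage_eq_preimage_image_of_comm {α β γ δ : Type*} {T : α → β}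
    {P : α → γ} {Q : β → δ} {T' : γ → δ} (hcomm : T' ∘ P = Q ∘ T) (hT : Surjective T)
    (hT' : Injective T') (S : Set γ) : T '' (P ⁻¹' S) = Q ⁻¹' (T' '' S) := by
  ext y
  obtain ⟨x, rfl⟩ := hT y
  refine ⟨?_, fun ⟨z, hz, hzx⟩ => ?_⟩
  · rintro ⟨x', hx', hx'x⟩
    exact ⟨P x', hx', by rw [← hx'x]; exact congrFun hcomm x'⟩
  · have hPx : P x = z := hT' ((congrFun hcomm x).trans hzx.symm)
    exact ⟨x, show P x ∈ S from hPx ▸ hz, rfl⟩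

theorem exists_finset_subset_of_isOpen_of_discreteTopology {X Y : Type*} [TopologicalSpace Y]
    [DiscreteTopology Y] {S : Set (X → Y)} {U : Set S} (hU : IsOpen U) {f : S} (hf : f ∈ U) :
    ∃ I : Finset X, {g : S | ∀ x ∈ I, g.1 x = f.1 x} ⊆ U := by
  obtain ⟨U', hU'open, rfl⟩ := isOpen_induced_iff.mp hU
  obtain ⟨I, u, hu, hsub⟩ := isOpen_pi_iff.mp hU'open f.1 hf
  refine ⟨I, fun g hg => hsub fun x hx => ?_⟩
  rw [hg x hx]
  exact (hu x hx).2

section Clone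

variable {Ω Ω' : Type*}

def precomp {n m : ℕ} (e : Fin n → (Fin m → Ω) → Ω) (f : (Fin n → Ω) → Ω) :
    (Fin m → Ω) → Ω :=
  fun x => f fun i => e i x

theorem continuous_precomp [TopologicalSpace Ω] {n m : ℕ} (e : Fin n → (Fin m → Ω) → Ω) :
    Continuous (precomp e) :=
  continuous_pi fun _ => continuous_apply _

theorem IsClone.mapsTo_precomp {C : ∀ n : ℕ, Set ((Fin n → Ω) → Ω)} (hC : IsClone C)
    {n m : ℕ} {e : Fin n → (Fin m → Ω) → Ω} (he : ∀ i, e i ∈ C m) :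
    MapsTo (precomp e) (C n) (C m) :=
  fun f hf => hC.2 n m f hf e he

theorem IsCloneHom.restrict_comp_precomp {C : ∀ n : ℕ, Set ((Fin n → Ω) → Ω)}
    {D : ∀ n : ℕ, Set ((Fin n → Ω') → Ω')} (hC : IsClone C) (hD : IsClone D)
    {ξ : ∀ n : ℕ, ((Fin n → Ω) → Ω) → ((Fin n → Ω') → Ω')} (hξ : IsCloneHom C D ξ)
    {n m : ℕ} {e : Fin n → (Fin m → Ω) → Ω} (he : ∀ i, e i ∈ C m) :
    (hξ.1 m).restrict ∘ (hC.mapsTo_precomp he).restrict =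
      (hD.mapsTo_precomp fun i => hξ.1 m (he i)).restrict ∘ (hξ.1 n).restrict :=
  funext fun f => Subtype.ext (hξ.2.2 n m f.1 f.2 e he)

def IsWeaklyDirected (C : ∀ n : ℕ, Set ((Fin n → Ω) → Ω)) : Prop :=
  ∀ a b : Ω, ∃ f ∈ C 1, ∃ g ∈ C 1, ∃ c : Ω, f (fun _ => c) = a ∧ g (fun _ => c) = b

theorem IsWeaklyDirected.exists_unary_encoding [Nonempty Ω]
    {C : ∀ n : ℕ, Set ((Fin n → Ω) → Ω)} (hdir : IsWeaklyDirected C) (hC : IsClone C) :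
    ∀ {n : ℕ} (a : Fin n → Ω), ∃ e : Fin n → (Fin 1 → Ω) → Ω,
      (∀ i, e i ∈ C 1) ∧ ∃ c : Ω, ∀ i, e i (fun _ => c) = a i
  | 0, _ => ⟨Fin.elim0, fun i => i.elim0, Classical.arbitrary Ω, fun i => i.elim0⟩
  | n + 1, a => by
    obtain ⟨e, he, c, hc⟩ := hdir.exists_unary_encoding hC (Fin.tail a)
    obtain ⟨u, hu, v, hv, d, hud, hvd⟩ := hdir c (a 0)
    refine ⟨Fin.cons v fun i x => e i fun _ => u x, Fin.cases hv fun i => ?_, d,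
      Fin.cases hvd fun i => ?_⟩
    · exact hC.2 1 1 (e i) (he i) (fun _ => u) fun _ => hu
    · simp only [Fin.cons_succ, hud, hc, Fin.tail]

variable [TopologicalSpace Ω] [DiscreteTopology Ω] [TopologicalSpace Ω']
  {C : ∀ n : ℕ, Set ((Fin n → Ω) → Ω)} {D : ∀ n : ℕ, Set ((Fin n → Ω') → Ω')}
  {ξ : ∀ n : ℕ, ((Fin n → Ω) → Ω) → ((Fin n → Ω') → Ω')}

theorem isOpen_setOf_apply_eq {n : ℕ} (S : Set ((Fin n → Ω) → Ω)) (a : Fin n → Ω) (b : Ω) :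
    IsOpen {f : S | f.1 a = b} := by
  have hcont : Continuous fun f : S => f.1 a := (continuous_apply a).comp continuous_subtype_val
  exact (isOpen_discrete {b}).preimage hcont

theorem IsCloneHom.isOpen_image_setOf_apply_eq (hC : IsClone C) (hD : IsClone D)
    (hdir : IsWeaklyDirected C) (hξ : IsCloneHom C D ξ) {n : ℕ}
    (hsurj : Surjective (hξ.1 n).restrict) (hinj : Injective (hξ.1 1).restrict)
    (hopen : IsOpenMap (hξ.1 1).restrict) (a : Fin n → Ω) (b : Ω) :
    IsOpen ((hξ.1 n).restrict '' {f : C n | f.1 a = b}) := by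
  have : Nonempty Ω := ⟨b⟩
  obtain ⟨e, he, c, hc⟩ := hdir.exists_unary_encoding hC a
  have hpre : {f : C n | f.1 a = b} =
      (hC.mapsTo_precomp he).restrict ⁻¹' {h : C 1 | h.1 (fun _ => c) = b} := by
    ext f
    simp [precomp, hc]
  rw [hpre, image_preimage_eq_preimage_image_of_comm (hξ.restrict_comp_precomp hC hD he)
    hsurj hinj]
  exact (hopen _ (isOpen_setOf_apply_eq _ _ _)).preimage
    ((continuous_precomp _).restrict _)

end Clone

theorem stmt_18_general {Ω Ω' : Type*} [TopologicalSpace Ω] [DiscreteTopology Ω]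
    [TopologicalSpace Ω']
    (C : ∀ n : ℕ, Set ((Fin n → Ω) → Ω)) (D : ∀ n : ℕ, Set ((Fin n → Ω') → Ω'))
    (hC : IsClone C) (hD : IsClone D)
    (hdir : ∀ a b : Ω, ∃ f ∈ C 1, ∃ g ∈ C 1, ∃ c : Ω,
      f (fun _ => c) = a ∧ g (fun _ => c) = b)
    (ξ : ∀ n : ℕ, ((Fin n → Ω) → Ω) → ((Fin n → Ω') → Ω'))
    (hξ : IsCloneHom C D ξ)
    (hbij : ∀ n : ℕ, Function.Bijective (Set.MapsTo.restrict (ξ n) (C n) (D n) (hξ.1 n)))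
    (hopen1 : IsOpenMap (Set.MapsTo.restrict (ξ 1) (C 1) (D 1) (hξ.1 1))) :
    ∀ n : ℕ, IsOpenMap (Set.MapsTo.restrict (ξ n) (C n) (D n) (hξ.1 n)) := by
  intro n U hU
  rw [isOpen_iff_forall_mem_open]
  rintro _ ⟨f, hfU, rfl⟩
  obtain ⟨I, hIU⟩ := exists_finset_subset_of_isOpen_of_discreteTopology hU hfU
  have hbasic : {g : C n | ∀ a ∈ I, g.1 a = f.1 a} = ⋂ a ∈ I, {g : C n | g.1 a = f.1 a} := by
    ext; simp
  refine ⟨_, image_mono hIU, ?_, f, by simp, rfl⟩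
  rw [hbasic, image_iInter₂ (hbij n)]
  exact I.finite_toSet.isOpen_biInter fun a _ =>
    hξ.isOpen_image_setOf_apply_eq hC hD hdir (hbij n).2 (hbij 1).1 hopen1 a (f.1 a)

/-- Let C and D be closed function clones with C weakly directed. If
ξ : C → D is a clone isomorphism whose restriction to unary functions is an open map
(pointwise convergence topologies), then ξ is an open map. -/
theorem stmt_18 {Ω Ω' : Type*} [TopologicalSpace Ω] [DiscreteTopology Ω]
    [TopologicalSpace Ω'] [DiscreteTopology Ω']
    (C : ∀ n : ℕ, Set ((Fin n → Ω) → Ω)) (D : ∀ n : ℕ, Set ((Fin n → Ω') → Ω'))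
    (hC : IsClone C) (hD : IsClone D)
    (hCclosed : ∀ n : ℕ, IsClosed (C n)) (hDclosed : ∀ n : ℕ, IsClosed (D n))
    (hdir : ∀ a b : Ω, ∃ f ∈ C 1, ∃ g ∈ C 1, ∃ c : Ω,
      f (fun _ => c) = a ∧ g (fun _ => c) = b)
    (ξ : ∀ n : ℕ, ((Fin n → Ω) → Ω) → ((Fin n → Ω') → Ω'))
    (hξ : IsCloneHom C D ξ)
    (hbij : ∀ n : ℕ, Function.Bijective (Set.MapsTo.restrict (ξ n) (C n) (D n) (hξ.1 n)))
    (hopen1 : IsOpenMap (Set.MapsTo.restrict (ξ 1) (C 1) (D 1) (hξ.1 1))) :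
    ∀ n : ℕ, IsOpenMap (Set.MapsTo.restrict (ξ n) (C n) (D n) (hξ.1 n)) :=
  stmt_18_general C D hC hD hdir ξ hξ hbij hopen1
end
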